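/- If A' crosses a domain from right to left, i.e., given domains D (with times t0 ≤ t1 and boundary functions L, R : [t0,t1] → ℤ with L ≤ R) and D' (with times t0' ≤ t1' and boundary functions L', R'), satisfying t0 ≤ t0' ≤ t1 ≤ t1', R(t0') ≤ L'(t0'), and R'(t1) ≤ L(t1), then the grafting D'' defined by L''(t) = L(t) for t ∈ [t0,t0'], L''(t) = min(L(t),L'(t)) for t ∈ (t0',t1), L''(t) = L'(t) for t ∈ [t1,t1'], and R''(t) = R(t) for t ∈ [t0,t0'), R''(t) = max(R(t),R'(t)) for t ∈ [t0',t1], R''(t) = R'(t) for t ∈ (t1,t1'], is again a domain, i.e., L''(t) ≤ R''(t) for all t ∈ (t0,t1']. -/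

import Mathlib

/-!
Up to `t1` the grafted boundaries enclose those of `D` (`L'' ≤ L`, `R ≤ R''`), except that
`L''` switches to `L'` at `t1`; from `t0'` on they enclose those of `D'`. So `L'' ≤ R''` is
inherited from `D` on `(t0, t0'] ∪ (t0, t1)` and from `D'` on the rest of `(t0, t1']`.
-/

theorem grafting_is_domain_general
    (t0 t1 t0' t1' : ℝ) (L R L' R' L'' R'' : ℝ → ℤ)
    (hord : t0 ≤ t0' ∧ t0' ≤ t1 ∧ t1 ≤ t1')
    (hD : ∀ t, t0 < t → t ≤ t1 → L t ≤ R t)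
    (hD' : ∀ t, t0' < t → t ≤ t1' → L' t ≤ R' t)
    (hL''1 : ∀ t, t0 ≤ t → t ≤ t0' → L'' t = L t)
    (hL''2 : ∀ t, t0' < t → t < t1 → L'' t = min (L t) (L' t))
    (hL''3 : ∀ t, t1 ≤ t → t ≤ t1' → L'' t = L' t)
    (hR''1 : ∀ t, t0 ≤ t → t < t0' → R'' t = R t)
    (hR''2 : ∀ t, t0' ≤ t → t ≤ t1 → R'' t = max (R t) (R' t))
    (hR''3 : ∀ t, t1 < t → t ≤ t1' → R'' t = R' t) :
    ∀ t, t0 < t → t ≤ t1' → L'' t ≤ R'' t := by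
  obtain ⟨h00', h0'1, h11'⟩ := hord
  have hL''_le_L : ∀ t, t0 ≤ t → t ≤ t0' ∨ t < t1 → L'' t ≤ L t := fun t ht0 ht ↦ by
    rcases le_or_gt t t0' with h | h
    · exact (hL''1 t ht0 h).le
    · rw [hL''2 t h (ht.resolve_left h.not_ge)]; exact min_le_left _ _
  have hR_le_R'' : ∀ t, t0 ≤ t → t ≤ t1 → R t ≤ R'' t := fun t ht0 ht1 ↦ by
    rcases lt_or_ge t t0' with h | h
    · exact (hR''1 t ht0 h).ge
    · rw [hR''2 t h ht1]; exact le_max_left _ _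
  have hL''_le_L' : ∀ t, t0' < t → t ≤ t1' → L'' t ≤ L' t := fun t ht0' ht1' ↦ by
    rcases lt_or_ge t t1 with h | h
    · rw [hL''2 t ht0' h]; exact min_le_right _ _
    · exact (hL''3 t h ht1').le
  have hR'_le_R'' : ∀ t, t0' ≤ t → t ≤ t1' → R' t ≤ R'' t := fun t ht0' ht1' ↦ by
    rcases le_or_gt t t1 with h | h
    · rw [hR''2 t ht0' h]; exact le_max_right _ _
    · exact (hR''3 t h ht1').ge
  intro t ht0 ht1'
  by_cases hD_range : t ≤ t0' ∨ t < t1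
  · have ht1 : t ≤ t1 := hD_range.elim (·.trans h0'1) le_of_lt
    exact (hL''_le_L t ht0.le hD_range).trans ((hD t ht0 ht1).trans (hR_le_R'' t ht0.le ht1))
  · have ht0' : t0' < t := not_le.mp fun h ↦ hD_range (.inl h)
    exact (hL''_le_L' t ht0' ht1').trans ((hD' t ht0' ht1').trans (hR'_le_R'' t ht0'.le ht1'))

/-- Grafting of domains: if `D'` crosses `D` from right to left, the grafted
boundary functions `L''`, `R''` satisfy `L'' ≤ R''` on `(t0, t1']`,
so the grafting is again a domain. -/
theorem grafting_is_domain
    (t0 t1 t0' t1' : ℝ) (L R L' R' L'' R'' : ℝ → ℤ)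
    (hord : t0 ≤ t0' ∧ t0' ≤ t1 ∧ t1 ≤ t1')
    (hD : ∀ t, t0 < t → t ≤ t1 → L t ≤ R t)
    (hD' : ∀ t, t0' < t → t ≤ t1' → L' t ≤ R' t)
    (hcross1 : R t0' ≤ L' t0')
    (hcross2 : R' t1 ≤ L t1)
    (hL''1 : ∀ t, t0 ≤ t → t ≤ t0' → L'' t = L t)
    (hL''2 : ∀ t, t0' < t → t < t1 → L'' t = min (L t) (L' t))
    (hL''3 : ∀ t, t1 ≤ t → t ≤ t1' → L'' t = L' t)
    (hR''1 : ∀ t, t0 ≤ t → t < t0' → R'' t = R t)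
    (hR''2 : ∀ t, t0' ≤ t → t ≤ t1 → R'' t = max (R t) (R' t))
    (hR''3 : ∀ t, t1 < t → t ≤ t1' → R'' t = R' t) :
    ∀ t, t0 < t → t ≤ t1' → L'' t ≤ R'' t :=
  grafting_is_domain_general t0 t1 t0' t1' L R L' R' L'' R'' hord hD hD' hL''1 hL''2 hL''3 hR''1
    hR''2 hR''3
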